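/- State elimination preserves loop-connectedness: if the generalized HMSC H is loop-connected (for every state s', every cMSC generated by a path from s' to s' is connected), then so is H_s obtained by eliminating a non-initial, non-accepting state s. -/

import Mathlib

/-! Core definitions: compositional message sequence charts (cMSCs),
concatenation, infinite products, completeness and connectedness. -/

namespace HMSCPaper

/-- Communication actions: `send p q` is `p!q`, `recv p q` is `p?q`
(process `p` receives from `q`). -/
inductive Act (P : Type) where
  | send : P → P → Act P
  | recv : P → P → Act P

/-- The process executing an action. -/
def Act.proc {P : Type} : Act P → P
  | .send p _ => p
  | .recv p _ => p

/-- A compositional MSC over processes `P` and messages `Msg`: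
a partially ordered set of events labeled by actions, with a message-matching
relation `tri` (◁) satisfying FIFO per channel, the order being generated by
process successors and message edges, unmatched events carrying a message of `Msg`. -/
structure CMSC (P Msg : Type) where
  E : Type
  le : E → E → Prop
  tri : E → E → Prop
  lab : E → Act P
  msg : E → Option Msg
  nonempty : Nonempty E
  le_refl : ∀ e, le e e
  le_trans : ∀ {a b c}, le a b → le b c → le a c
  le_antisymm : ∀ {a b}, le a b → le b a → a = b
  /-- events of the same process are totally ordered -/
  proc_total : ∀ e f, (lab e).proc = (lab f).proc → le e f ∨ le f e
  /-- every event has finitely many predecessors on its own process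
  (per-process order type finite or ω) -/
  proc_wf : ∀ e, Finite {f : E // (lab f).proc = (lab e).proc ∧ le f e}
  tri_le : ∀ {e f}, tri e f → le e f
  /-- matched pairs are send/receive pairs on a channel -/
  tri_lab : ∀ {e f}, tri e f → ∃ p q, lab e = Act.send p q ∧ lab f = Act.recv q p
  /-- FIFO policy per channel -/
  fifo : ∀ {e e' f f' p q}, tri e f → tri e' f' →
    lab e = Act.send p q → lab e' = Act.send p q → (le e e' ↔ le f f')
  /-- exactly the unmatched events carry a message label -/
  msg_dom : ∀ e, (msg e ≠ none) ↔ ((∀ f, ¬ tri e f) ∧ (∀ f, ¬ tri f e))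
  /-- the partial order is the reflexive transitive closure of
  process successor and message edges -/
  le_gen : ∀ e f, le e f ↔ Relation.ReflTransGen
    (fun a b => tri a b ∨ ((lab a).proc = (lab b).proc ∧ le a b ∧ a ≠ b ∧
      ∀ c, (lab c).proc = (lab a).proc → le a c → le c b → c = a ∨ c = b)) e f
  /-- unmatched events with the same action label as a matched pair occur after
  the matched send / before the matched receive -/
  unm_late : ∀ {e f} (g : E), tri e f →
    ((∀ h, ¬ tri g h) ∧ (∀ h, ¬ tri h g)) →
    ((lab g = lab e → le e g ∧ e ≠ g) ∧ (lab g = lab f → le g f ∧ g ≠ f))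

/-- An event is unmatched if it is related to no event by ◁. -/
def CMSC.Unmatched {P Msg : Type} (M : CMSC P Msg) (e : M.E) : Prop :=
  (∀ f, ¬ M.tri e f) ∧ (∀ f, ¬ M.tri f e)

/-- A (complete) MSC: no unmatched events. -/
def CMSC.Complete {P Msg : Type} (M : CMSC P Msg) : Prop :=
  ∀ e, ¬ M.Unmatched e

/-- A cMSC is connected if the undirected graph on events
with edges `≤ ∪ ≤⁻¹` is connected. -/
def CMSC.Connected {P Msg : Type} (M : CMSC P Msg) : Prop :=
  ∀ x y : M.E, Relation.ReflTransGen (fun a b => M.le a b ∨ M.le b a) x y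

/-- Witness that `M` belongs to the concatenation `M₁ ∘ M₂`: `M` is the vertical
stacking of `M₁` above `M₂`, with per-process order `E¹_p × E²_p` added, and
possibly new message edges matching unmatched sends of `M₁` with unmatched
receives of `M₂` carrying the same message. -/
structure IsConcat {P Msg : Type} (M₁ M₂ M : CMSC P Msg) where
  eqv : M.E ≃ (M₁.E ⊕ M₂.E)
  lab_eq : ∀ e, M.lab e = Sum.elim M₁.lab M₂.lab (eqv e)
  le_left : ∀ a b : M₁.E, (M₁.lab a).proc = (M₁.lab b).proc →
    (M.le (eqv.symm (.inl a)) (eqv.symm (.inl b)) ↔ M₁.le a b)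
  le_right : ∀ a b : M₂.E, (M₂.lab a).proc = (M₂.lab b).proc →
    (M.le (eqv.symm (.inr a)) (eqv.symm (.inr b)) ↔ M₂.le a b)
  le_cross : ∀ (a : M₁.E) (b : M₂.E), (M₁.lab a).proc = (M₂.lab b).proc →
    M.le (eqv.symm (.inl a)) (eqv.symm (.inr b))
  tri_left : ∀ a b : M₁.E,
    (M.tri (eqv.symm (.inl a)) (eqv.symm (.inl b)) ↔ M₁.tri a b)
  tri_right : ∀ a b : M₂.E,
    (M.tri (eqv.symm (.inr a)) (eqv.symm (.inr b)) ↔ M₂.tri a b)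
  tri_cross : ∀ (a : M₁.E) (b : M₂.E),
    M.tri (eqv.symm (.inl a)) (eqv.symm (.inr b)) →
    M₁.msg a = M₂.msg b ∧ M₁.msg a ≠ none
  tri_back : ∀ (a : M₂.E) (b : M₁.E), ¬ M.tri (eqv.symm (.inr a)) (eqv.symm (.inl b))
  msg_eq : ∀ e, M.Unmatched e → M.msg e = Sum.elim M₁.msg M₂.msg (eqv e)

/-- `M ∈ M₁ ∘ M₂`. -/
def ConcatMem {P Msg : Type} (M₁ M₂ M : CMSC P Msg) : Prop :=
  Nonempty (IsConcat M₁ M₂ M)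

/-- `M` is a composition of the nonempty list `l` of cMSCs (left to right). -/
def ConcatChain {P Msg : Type} : List (CMSC P Msg) → CMSC P Msg → Prop
  | [], _ => False
  | [N], M => M = N
  | N :: N' :: l, M => ∃ M', ConcatChain (N' :: l) M' ∧ ConcatMem N M' M

end HMSCPaper

namespace HMSCPaper

/-- Concatenation of cMSC languages, elementwise. -/
def LangConcat {P Msg : Type} (K₁ K₂ : Set (CMSC P Msg)) : Set (CMSC P Msg) :=
  {M | ∃ M₁ ∈ K₁, ∃ M₂ ∈ K₂, ConcatMem M₁ M₂ M}

/-- Finite iteration `K⁺` of a cMSC language. -/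
def LangPlus {P Msg : Type} (K : Set (CMSC P Msg)) : Set (CMSC P Msg) :=
  {M | ∃ l : List (CMSC P Msg), l ≠ [] ∧ (∀ N ∈ l, N ∈ K) ∧ ConcatChain l M}

/-- `Gen R s s' M`: the cMSC `M` is generated by some finite path from `s` to `s'`
in the generalized HMSC with transition-language function `R`
(composition of the labels along the path). -/
inductive Gen {S P Msg : Type} (R : S → S → Set (CMSC P Msg)) : S → S → CMSC P Msg → Prop
  | base {s s' : S} {M : CMSC P Msg} : M ∈ R s s' → Gen R s s' M
  | step {s t s' : S} {M₁ M₂ M : CMSC P Msg} :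
      M₁ ∈ R s t → Gen R t s' M₂ → ConcatMem M₁ M₂ M → Gen R s s' M

/-- The transition-language function after eliminating state `s`:
`R_s(s₁,s₂) = R(s₁,s₂) ∪ (R(s₁,s) ∘ R(s,s₂)) ∪ (R(s₁,s) ∘ R(s,s)⁺ ∘ R(s,s₂))`. -/
def ElimR {S P Msg : Type} (R : S → S → Set (CMSC P Msg)) (s : S) (s₁ s₂ : S) :
    Set (CMSC P Msg) :=
  R s₁ s₂ ∪ LangConcat (R s₁ s) (R s s₂) ∪
    LangConcat (R s₁ s) (LangConcat (LangPlus (R s s)) (R s s₂))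

end HMSCPaper

namespace HMSCPaper

open Relation Sum

variable {P Msg : Type}

/-- The generating edge relation of a cMSC. -/
def CMSC.Edge (M : CMSC P Msg) (a b : M.E) : Prop :=
  M.tri a b ∨ ((M.lab a).proc = (M.lab b).proc ∧ M.le a b ∧ a ≠ b ∧
    ∀ c, (M.lab c).proc = (M.lab a).proc → M.le a c → M.le c b → c = a ∨ c = b)

theorem CMSC.le_iff_edge (M : CMSC P Msg) (e f : M.E) :
    M.le e f ↔ ReflTransGen M.Edge e f := M.le_gen e f

theorem CMSC.Edge.le {M : CMSC P Msg} {a b : M.E} (h : M.Edge a b) : M.le a b :=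
  h.elim M.tri_le (fun h' => h'.2.1)

theorem tri_unique_right {M : CMSC P Msg} {e f f' : M.E}
    (h1 : M.tri e f) (h2 : M.tri e f') : f = f' := by
  obtain ⟨p, q, he, _⟩ := M.tri_lab h1
  exact M.le_antisymm ((M.fifo h1 h2 he he).mp (M.le_refl e))
    ((M.fifo h2 h1 he he).mp (M.le_refl e))

theorem tri_unique_left {M : CMSC P Msg} {e e' f : M.E}
    (h1 : M.tri e f) (h2 : M.tri e' f) : e = e' := by
  obtain ⟨p, q, he, hf⟩ := M.tri_lab h1
  obtain ⟨p', q', he', hf'⟩ := M.tri_lab h2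
  rw [hf] at hf'
  injection hf' with hq hp
  subst hq; subst hp
  exact M.le_antisymm ((M.fifo h1 h2 he he').mpr (M.le_refl f))
    ((M.fifo h2 h1 he' he).mpr (M.le_refl f))

theorem IsConcat.lab_symm_inl {A B C : CMSC P Msg} (c : IsConcat A B C) (x : A.E) :
    C.lab (c.eqv.symm (inl x)) = A.lab x := by rw [c.lab_eq]; simp

theorem IsConcat.lab_symm_inr {A B C : CMSC P Msg} (c : IsConcat A B C) (x : B.E) :
    C.lab (c.eqv.symm (inr x)) = B.lab x := by rw [c.lab_eq]; simp

theorem IsConcat.edge_descend {A B C : CMSC P Msg} (c : IsConcat A B C) {b f : C.E}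
    (h : C.Edge b f) :
    ((c.eqv b).isRight → (c.eqv f).isRight) ∧
    (∀ x y, c.eqv b = inl x → c.eqv f = inl y → A.le x y) := by
  have hb : b = c.eqv.symm (c.eqv b) := (c.eqv.symm_apply_apply b).symm
  have hf : f = c.eqv.symm (c.eqv f) := (c.eqv.symm_apply_apply f).symm
  rcases hxb : c.eqv b with x | x <;> rcases hxf : c.eqv f with y | y
  · -- inl inl
    refine ⟨by simp, fun x' y' hx' hy' => ?_⟩
    injection hx' with hx'; injection hy' with hy'
    subst hx'; subst hy'
    rw [hxb] at hb; rw [hxf] at hf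
    rcases h with h | ⟨hp, hle, hne, _⟩
    · rw [hb, hf] at h
      exact A.tri_le ((c.tri_left x y).mp h)
    · rw [hb, hf] at hle
      have hp' : (A.lab x).proc = (A.lab y).proc := by
        rw [hb, hf, c.lab_symm_inl, c.lab_symm_inl] at hp; exact hp
      exact (c.le_left x y hp').mp hle
  · exact ⟨by simp, fun x' y' _ hy' => by cases hy'⟩
  · -- inr inl : impossible
    exfalso
    rw [hxb] at hb; rw [hxf] at hf
    rcases h with h | ⟨hp, hle, hne, _⟩
    · rw [hb, hf] at h
      exact c.tri_back x y h
    · have hp' : (A.lab y).proc = (B.lab x).proc := by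
        rw [hb, hf, c.lab_symm_inr, c.lab_symm_inl] at hp; exact hp.symm
      have h2 := c.le_cross y x hp'
      rw [hb, hf] at hle
      exact hne (by rw [hb, hf, C.le_antisymm hle h2])
  · exact ⟨fun _ => by simp, fun x' y' hx' _ => by cases hx'⟩

theorem IsConcat.le_descend {A B C : CMSC P Msg} (c : IsConcat A B C) {e f : C.E}
    (h : C.le e f) :
    ((c.eqv e).isRight → (c.eqv f).isRight) ∧
    (∀ x y, c.eqv e = inl x → c.eqv f = inl y → A.le x y) := by
  rw [C.le_iff_edge] at h
  induction h with
  | refl =>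
    refine ⟨id, fun x y hx hy => ?_⟩
    rw [hx] at hy; injection hy with hy; rw [hy]; exact A.le_refl _
  | tail hab hbc ih =>
    refine ⟨fun hr => (c.edge_descend hbc).1 (ih.1 hr), fun x y hx hy => ?_⟩
    rcases hm : c.eqv _ with m | m
    · exact A.le_trans (ih.2 x m hx hm) ((c.edge_descend hbc).2 m y hm hy)
    · have h2 := (c.edge_descend hbc).1 (by rw [hm]; rfl)
      rw [hy] at h2; simp at h2

theorem IsConcat.not_le_back {A B C : CMSC P Msg} (c : IsConcat A B C) {u : B.E} {v : A.E} :
    ¬ C.le (c.eqv.symm (inr u)) (c.eqv.symm (inl v)) := by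
  intro h
  have h2 := (c.le_descend h).1 (by simp)
  simp at h2

theorem IsConcat.le_inl {A B C : CMSC P Msg} (c : IsConcat A B C) {x y : A.E}
    (h : C.le (c.eqv.symm (inl x)) (c.eqv.symm (inl y))) : A.le x y :=
  (c.le_descend h).2 x y (by simp) (by simp)

section Assoc

variable {N₁ N₂ M₁ M₂ M : CMSC P Msg}

/-- Embedding of the would-be middle cMSC `N₂ ∘ M₂` into `M`. -/
def iot (c1 : IsConcat N₁ N₂ M₁) (c2 : IsConcat M₁ M₂ M) : N₂.E ⊕ M₂.E → M.E
  | inl a => c2.eqv.symm (inl (c1.eqv.symm (inr a)))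
  | inr b => c2.eqv.symm (inr b)

variable (c1 : IsConcat N₁ N₂ M₁) (c2 : IsConcat M₁ M₂ M)

theorem iot_inj : Function.Injective (iot c1 c2) := by
  intro z w h
  rcases z with a | a <;> rcases w with b | b <;> simp [iot] at h <;> simp [h]

theorem lab_iot_inl (a : N₂.E) : M.lab (iot c1 c2 (inl a)) = N₂.lab a := by
  show M.lab (c2.eqv.symm (inl (c1.eqv.symm (inr a)))) = _
  rw [c2.lab_symm_inl, c1.lab_symm_inr]

theorem lab_iot_inr (b : M₂.E) : M.lab (iot c1 c2 (inr b)) = M₂.lab b := by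
  show M.lab (c2.eqv.symm (inr b)) = _
  rw [c2.lab_symm_inr]

/-- The generating edge relation of the middle cMSC, expressed in `M`. -/
def MidEdge (z w : N₂.E ⊕ M₂.E) : Prop :=
  M.tri (iot c1 c2 z) (iot c1 c2 w) ∨
    ((M.lab (iot c1 c2 z)).proc = (M.lab (iot c1 c2 w)).proc ∧
     M.le (iot c1 c2 z) (iot c1 c2 w) ∧ z ≠ w ∧
     ∀ u, (M.lab (iot c1 c2 u)).proc = (M.lab (iot c1 c2 z)).proc →
       M.le (iot c1 c2 z) (iot c1 c2 u) → M.le (iot c1 c2 u) (iot c1 c2 w) → u = z ∨ u = w)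

theorem step_mid {f : M.E} (z : N₂.E ⊕ M₂.E) (hedge : M.Edge (iot c1 c2 z) f) :
    ∃ w, f = iot c1 c2 w ∧ MidEdge c1 c2 z w := by
  -- first: f lies in the region
  have hreg : ∃ w, f = iot c1 c2 w := by
    rcases hf2 : c2.eqv f with x | b2
    · rcases hf1 : c1.eqv x with n | a
      · -- f is an N₁ event : contradiction
        exfalso
        have hfx : f = c2.eqv.symm (inl (c1.eqv.symm (inl n))) := by
          rw [← hf1, c1.eqv.symm_apply_apply, ← hf2, c2.eqv.symm_apply_apply]
        rcases hedge with h | ⟨_, hle, hne, _⟩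
        · rcases z with a' | b'
          · rw [hfx] at h
            have h2 := (c2.tri_left _ _).mp h
            exact c1.tri_back _ _ h2
          · rw [hfx] at h
            exact c2.tri_back _ _ h
        · rcases z with a' | b'
          · rw [hfx] at hle
            exact c1.not_le_back (c2.le_inl hle)
          · rw [hfx] at hle
            exact c2.not_le_back hle
      · refine ⟨inl a, ?_⟩
        show f = c2.eqv.symm (inl (c1.eqv.symm (inr a)))
        rw [← hf1, c1.eqv.symm_apply_apply, ← hf2, c2.eqv.symm_apply_apply]
    · refine ⟨inr b2, ?_⟩
      show f = c2.eqv.symm (inr b2)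
      rw [← hf2, c2.eqv.symm_apply_apply]
  obtain ⟨w, rfl⟩ := hreg
  refine ⟨w, rfl, ?_⟩
  rcases hedge with h | ⟨hp, hle, hne, hmin⟩
  · exact Or.inl h
  · refine Or.inr ⟨hp, hle, fun hzw => hne (by rw [hzw]), fun u hpu hzu huw => ?_⟩
    rcases hmin (iot c1 c2 u) hpu hzu huw with h | h
    · exact Or.inl (iot_inj c1 c2 h)
    · exact Or.inr (iot_inj c1 c2 h)

theorem le_mid {e f : M.E} (h : M.le e f) :
    ∀ z, e = iot c1 c2 z → ∃ w, f = iot c1 c2 w ∧ ReflTransGen (MidEdge c1 c2) z w := by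
  rw [M.le_iff_edge] at h
  induction h with
  | refl => exact fun z hz => ⟨z, hz, .refl⟩
  | tail hab hbc ih =>
    intro z hz
    obtain ⟨w, hw, hp⟩ := ih z hz
    obtain ⟨w', hw', he⟩ := step_mid c1 c2 w (hw ▸ hbc)
    exact ⟨w', hw', hp.tail he⟩

theorem midEdge_le {z w : N₂.E ⊕ M₂.E} (h : MidEdge c1 c2 z w) :
    M.le (iot c1 c2 z) (iot c1 c2 w) :=
  h.elim M.tri_le (fun h' => h'.2.1)

/-- Unmatchedness in the middle cMSC. -/
def MidUnm (z : N₂.E ⊕ M₂.E) : Prop :=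
  (∀ w, ¬ M.tri (iot c1 c2 z) (iot c1 c2 w)) ∧ (∀ w, ¬ M.tri (iot c1 c2 w) (iot c1 c2 z))

theorem mid_unm_comp {z : N₂.E ⊕ M₂.E} (h : MidUnm c1 c2 z) :
    Sum.elim N₂.msg M₂.msg z ≠ none := by
  rcases z with a | b
  · show N₂.msg a ≠ none
    refine (N₂.msg_dom a).mpr ⟨fun f hf => h.1 (inl f) ?_, fun f hf => h.2 (inl f) ?_⟩
    · show M.tri (c2.eqv.symm (inl _)) (c2.eqv.symm (inl _))
      exact (c2.tri_left _ _).mpr ((c1.tri_right _ _).mpr hf)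
    · show M.tri (c2.eqv.symm (inl _)) (c2.eqv.symm (inl _))
      exact (c2.tri_left _ _).mpr ((c1.tri_right _ _).mpr hf)
  · show M₂.msg b ≠ none
    refine (M₂.msg_dom b).mpr ⟨fun f hf => h.1 (inr f) ?_, fun f hf => h.2 (inr f) ?_⟩
    · exact (c2.tri_right _ _).mpr hf
    · exact (c2.tri_right _ _).mpr hf

open Classical in
/-- The middle cMSC `N₂ ∘ M₂`, carved out of `M`. -/
noncomputable def mid : CMSC P Msg where
  E := N₂.E ⊕ M₂.E
  le z w := M.le (iot c1 c2 z) (iot c1 c2 w)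
  tri z w := M.tri (iot c1 c2 z) (iot c1 c2 w)
  lab z := M.lab (iot c1 c2 z)
  msg z := if MidUnm c1 c2 z then Sum.elim N₂.msg M₂.msg z else none
  nonempty := ⟨inl (Classical.choice N₂.nonempty)⟩
  le_refl z := M.le_refl _
  le_trans h1 h2 := M.le_trans h1 h2
  le_antisymm h1 h2 := iot_inj c1 c2 (M.le_antisymm h1 h2)
  proc_total z w h := M.proc_total _ _ h
  proc_wf z := by
    have h1 : Finite {f : M.E // (M.lab f).proc = (M.lab (iot c1 c2 z)).proc ∧
        M.le f (iot c1 c2 z)} := M.proc_wf _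
    exact Finite.of_injective
      (fun x => (⟨iot c1 c2 x.1, x.2⟩ :
        {f : M.E // (M.lab f).proc = (M.lab (iot c1 c2 z)).proc ∧ M.le f (iot c1 c2 z)}))
      (fun a b h => Subtype.ext (iot_inj c1 c2 (congrArg Subtype.val h)))
  tri_le h := M.tri_le h
  tri_lab h := M.tri_lab h
  fifo h1 h2 l1 l2 := M.fifo h1 h2 l1 l2
  msg_dom z := by
    constructor
    · intro hne
      have hne' : (if MidUnm c1 c2 z then Sum.elim N₂.msg M₂.msg z else none) ≠ none := hne
      by_cases hc : MidUnm c1 c2 z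
      · exact hc
      · rw [if_neg hc] at hne'; exact absurd rfl hne'
    · intro hu
      have hc : MidUnm c1 c2 z := hu
      show (if MidUnm c1 c2 z then Sum.elim N₂.msg M₂.msg z else none) ≠ none
      rw [if_pos hc]
      exact mid_unm_comp c1 c2 hc
  le_gen z w := by
    constructor
    · intro h
      obtain ⟨w', hw', hp⟩ := le_mid c1 c2 h z rfl
      obtain rfl : w = w' := iot_inj c1 c2 hw'
      exact hp
    · intro h
      induction h with
      | refl => exact M.le_refl _
      | tail _ hbc ih => exact M.le_trans ih (midEdge_le c1 c2 hbc)
  unm_late := by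
    intro e f g htri hg
    by_cases hM : M.Unmatched (iot c1 c2 g)
    · have h1 := M.unm_late (iot c1 c2 g) htri ⟨hM.1, hM.2⟩
      refine ⟨fun hl => ?_, fun hl => ?_⟩
      · obtain ⟨ha, hb⟩ := h1.1 hl
        exact ⟨ha, fun hef => hb (by rw [hef])⟩
      · obtain ⟨ha, hb⟩ := h1.2 hl
        exact ⟨ha, fun hef => hb (by rw [hef])⟩
    · simp only [CMSC.Unmatched, not_and_or, not_forall, not_not] at hM
      rcases hM with ⟨x, hx⟩ | ⟨u, hu⟩
      · -- g matched forward in M : partner in region, contradiction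
        exfalso
        obtain ⟨w, hw, _⟩ := step_mid c1 c2 g (Or.inl (show M.tri _ x from hx))
        refine hg.1 w ?_
        show M.tri (iot c1 c2 g) (iot c1 c2 w)
        rw [← hw]; exact hx
      · -- g matched backward in M
        rcases hu2 : c2.eqv u with x' | b2
        · rcases hu1 : c1.eqv x' with n | a
          · -- partner in N₁
            have hux : u = c2.eqv.symm (inl (c1.eqv.symm (inl n))) := by
              rw [← hu1, c1.eqv.symm_apply_apply, ← hu2, c2.eqv.symm_apply_apply]
            obtain ⟨p', q', hsu, hrg⟩ := M.tri_lab hu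
            obtain ⟨p, q, hse, hrf⟩ := M.tri_lab htri
            constructor
            · intro hl
              exfalso
              show False
              have : M.lab (iot c1 c2 g) = M.lab (iot c1 c2 e) := hl
              rw [hrg, hse] at this
              cases this
            · intro hl
              have hgf : M.lab (iot c1 c2 g) = M.lab (iot c1 c2 f) := hl
              rw [hrg, hrf] at hgf
              injection hgf with hq hp
              subst hq; subst hp
              have hfifo := M.fifo hu htri hsu hse
              have hule : M.le u (iot c1 c2 e) := by
                rcases M.proc_total u (iot c1 c2 e)
                    (by rw [hsu, hse]) with h' | h'
                · exact h'
                · exfalso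
                  rcases e with a' | b'
                  · rw [hux] at h'
                    exact c1.not_le_back (c2.le_inl h')
                  · rw [hux] at h'
                    exact c2.not_le_back h'
              refine ⟨hfifo.mp hule, fun hgf' => ?_⟩
              -- if g = f then u = iot e, impossible
              have : u = iot c1 c2 e := tri_unique_left (hgf' ▸ hu) htri
              rw [hux] at this
              rcases e with a' | b' <;> simp [iot] at this
          · exact absurd (show M.tri (iot c1 c2 (inl a)) (iot c1 c2 g) by
              show M.tri (c2.eqv.symm (inl (c1.eqv.symm (inr a)))) _
              rw [← hu1, c1.eqv.symm_apply_apply, ← hu2, c2.eqv.symm_apply_apply] at *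
              exact hu) (hg.2 (inl a))
        · exact absurd (show M.tri (iot c1 c2 (inr b2)) (iot c1 c2 g) by
            show M.tri (c2.eqv.symm (inr b2)) _
            rw [← hu2, c2.eqv.symm_apply_apply] at *
            exact hu) (hg.2 (inr b2))

open Classical in
/-- `mid c1 c2 ∈ N₂ ∘ M₂`. -/
def isConcatRight : IsConcat N₂ M₂ (mid c1 c2) where
  eqv := Equiv.refl _
  lab_eq z := by
    rcases z with a | b
    · exact lab_iot_inl c1 c2 a
    · exact lab_iot_inr c1 c2 b
  le_left a b h := by
    have hp : (M₁.lab (c1.eqv.symm (inr a))).proc = (M₁.lab (c1.eqv.symm (inr b))).proc := by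
      rw [c1.lab_symm_inr, c1.lab_symm_inr]; exact h
    show M.le (c2.eqv.symm (inl _)) (c2.eqv.symm (inl _)) ↔ _
    rw [c2.le_left _ _ hp, c1.le_right _ _ h]
  le_right a b h := by
    show M.le (c2.eqv.symm (inr a)) (c2.eqv.symm (inr b)) ↔ _
    exact c2.le_right a b h
  le_cross a b h := by
    have hp : (M₁.lab (c1.eqv.symm (inr a))).proc = (M₂.lab b).proc := by
      rw [c1.lab_symm_inr]; exact h
    exact c2.le_cross _ b hp
  tri_left a b := by
    show M.tri (c2.eqv.symm (inl _)) (c2.eqv.symm (inl _)) ↔ _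
    rw [c2.tri_left, c1.tri_right]
  tri_right a b := c2.tri_right a b
  tri_cross a b ht := by
    have ht' : M.tri (c2.eqv.symm (inl (c1.eqv.symm (inr a)))) (c2.eqv.symm (inr b)) := ht
    obtain ⟨heq, hnn⟩ := c2.tri_cross _ b ht'
    have hunm := (M₁.msg_dom _).mp hnn
    have h2 := c1.msg_eq _ hunm
    rw [c1.eqv.apply_symm_apply] at h2
    simp only [Sum.elim_inr] at h2
    rw [h2] at heq hnn
    exact ⟨heq, hnn⟩
  tri_back a b := by
    show ¬ M.tri (c2.eqv.symm (inr a)) (c2.eqv.symm (inl _))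
    exact c2.tri_back a _
  msg_eq z hz := by
    have hc : MidUnm c1 c2 z := hz
    show (if MidUnm c1 c2 z then Sum.elim N₂.msg M₂.msg z else none) = _
    rw [if_pos hc]
    rfl

/-- Helper equivalence for the left witness. -/
def eqvL : M.E ≃ (N₁.E ⊕ (N₂.E ⊕ M₂.E)) :=
  c2.eqv.trans ((c1.eqv.sumCongr (Equiv.refl M₂.E)).trans (Equiv.sumAssoc N₁.E N₂.E M₂.E))

theorem eqvL_symm_inl (n : N₁.E) :
    (eqvL c1 c2).symm (inl n) = c2.eqv.symm (inl (c1.eqv.symm (inl n))) := by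
  rw [Equiv.symm_apply_eq]
  simp [eqvL, Equiv.sumAssoc]

theorem eqvL_symm_inr (z : N₂.E ⊕ M₂.E) :
    (eqvL c1 c2).symm (inr z) = iot c1 c2 z := by
  rw [Equiv.symm_apply_eq]
  rcases z with a | b <;> simp [eqvL, iot, Equiv.sumAssoc]

/-- Events of the region matched in `M` by an `N₁` event are unmatched in `mid`. -/
theorem unm_of_outside {n : N₁.E} {z : N₂.E ⊕ M₂.E}
    (h : M.tri (c2.eqv.symm (inl (c1.eqv.symm (inl n)))) (iot c1 c2 z)) :
    MidUnm c1 c2 z := by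
  obtain ⟨p, q, hsu, hrz⟩ := M.tri_lab h
  constructor
  · intro w hw
    obtain ⟨p', q', hsz, _⟩ := M.tri_lab hw
    rw [hrz] at hsz
    cases hsz
  · intro w hw
    have heq := tri_unique_left hw h
    rcases w with a | b <;> simp [iot] at heq

open Classical in
/-- `M ∈ N₁ ∘ mid c1 c2`. -/
def isConcatLeft : IsConcat N₁ (mid c1 c2) M where
  eqv := eqvL c1 c2
  lab_eq e := by
    have key : ∀ u : N₁.E ⊕ (N₂.E ⊕ M₂.E),
        M.lab ((eqvL c1 c2).symm u) = Sum.elim N₁.lab (fun z => M.lab (iot c1 c2 z)) u := by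
      intro u
      rcases u with n | z
      · rw [eqvL_symm_inl, c2.lab_symm_inl, c1.lab_symm_inl]
        rfl
      · rw [eqvL_symm_inr]
        rfl
    have h2 : M.lab e = Sum.elim N₁.lab (fun z => M.lab (iot c1 c2 z)) (eqvL c1 c2 e) := by
      rw [← key, (eqvL c1 c2).symm_apply_apply]
    exact h2
  le_left a b h := by
    have key : M.le ((eqvL c1 c2).symm (inl a)) ((eqvL c1 c2).symm (inl b)) ↔ N₁.le a b := by
      rw [eqvL_symm_inl, eqvL_symm_inl]
      have hp : (M₁.lab (c1.eqv.symm (inl a))).proc = (M₁.lab (c1.eqv.symm (inl b))).proc := by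
        rw [c1.lab_symm_inl, c1.lab_symm_inl]; exact h
      rw [c2.le_left _ _ hp, c1.le_left _ _ h]
    exact key
  le_right z w h := by
    have key : M.le ((eqvL c1 c2).symm (inr z)) ((eqvL c1 c2).symm (inr w)) ↔
        M.le (iot c1 c2 z) (iot c1 c2 w) := by
      erw [eqvL_symm_inr, eqvL_symm_inr]
    exact key
  le_cross a z h := by
    have h' : (N₁.lab a).proc = (M.lab (iot c1 c2 z)).proc := h
    have key : M.le ((eqvL c1 c2).symm (inl a)) ((eqvL c1 c2).symm (inr z)) := by
      erw [eqvL_symm_inl, eqvL_symm_inr]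
      rcases z with b | b
      · have hp' : (N₁.lab a).proc = (N₂.lab b).proc := by
          rw [lab_iot_inl] at h'; exact h'
        have hp : (M₁.lab (c1.eqv.symm (inl a))).proc = (M₁.lab (c1.eqv.symm (inr b))).proc := by
          rw [c1.lab_symm_inl, c1.lab_symm_inr]; exact hp'
        exact (c2.le_left _ _ hp).mpr (c1.le_cross a b hp')
      · have hp : (M₁.lab (c1.eqv.symm (inl a))).proc = (M₂.lab b).proc := by
          rw [c1.lab_symm_inl]
          rw [lab_iot_inr] at h'; exact h'
        exact c2.le_cross _ b hp
    exact key
  tri_left a b := by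
    have key : M.tri ((eqvL c1 c2).symm (inl a)) ((eqvL c1 c2).symm (inl b)) ↔ N₁.tri a b := by
      rw [eqvL_symm_inl, eqvL_symm_inl, c2.tri_left, c1.tri_left]
    exact key
  tri_right z w := by
    have key : M.tri ((eqvL c1 c2).symm (inr z)) ((eqvL c1 c2).symm (inr w)) ↔
        M.tri (iot c1 c2 z) (iot c1 c2 w) := by
      erw [eqvL_symm_inr, eqvL_symm_inr]
    exact key
  tri_cross a z ht := by
    have ht' : M.tri ((eqvL c1 c2).symm (inl a)) ((eqvL c1 c2).symm (inr z)) := ht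
    erw [eqvL_symm_inl, eqvL_symm_inr] at ht'
    have hmu : MidUnm c1 c2 z := unm_of_outside c1 c2 ht'
    have hmsg : (if MidUnm c1 c2 z then Sum.elim N₂.msg M₂.msg z else none) =
        Sum.elim N₂.msg M₂.msg z := by rw [if_pos hmu]
    have key : N₁.msg a = (if MidUnm c1 c2 z then Sum.elim N₂.msg M₂.msg z else none) ∧
        N₁.msg a ≠ none := by
      rw [hmsg]
      rcases z with b | b
      · have ht2 : M₁.tri (c1.eqv.symm (inl a)) (c1.eqv.symm (inr b)) :=
          (c2.tri_left _ _).mp ht'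
        exact c1.tri_cross a b ht2
      · obtain ⟨heq, hnn⟩ := c2.tri_cross _ b ht'
        have hunm := (M₁.msg_dom _).mp hnn
        have h2 := c1.msg_eq _ hunm
        rw [c1.eqv.apply_symm_apply] at h2
        simp only [Sum.elim_inl] at h2
        rw [h2] at heq hnn
        exact ⟨heq, hnn⟩
    exact key
  tri_back z a := by
    have key : ¬ M.tri ((eqvL c1 c2).symm (inr z)) ((eqvL c1 c2).symm (inl a)) := by
      erw [eqvL_symm_inr, eqvL_symm_inl]
      intro h
      rcases z with b | b
      · exact c1.tri_back b a ((c2.tri_left _ _).mp h)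
      · exact c2.tri_back b _ h
    exact key
  msg_eq e he := by
    have he' : (∀ f, ¬ M.tri e f) ∧ (∀ f, ¬ M.tri f e) := he
    have key : M.msg e = Sum.elim N₁.msg
        (fun z => if MidUnm c1 c2 z then Sum.elim N₂.msg M₂.msg z else none)
        (eqvL c1 c2 e) := by
      have hgen : ∀ u : N₁.E ⊕ (N₂.E ⊕ M₂.E), e = (eqvL c1 c2).symm u →
          M.msg e = Sum.elim N₁.msg
            (fun z => if MidUnm c1 c2 z then Sum.elim N₂.msg M₂.msg z else none) u := by
        intro u hu
        rcases u with n | z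
        · rw [eqvL_symm_inl] at hu
          subst hu
          have h2 := c2.msg_eq _ he
          rw [c2.eqv.apply_symm_apply] at h2
          simp only [Sum.elim_inl] at h2
          have hunm : (∀ f, ¬ M₁.tri (c1.eqv.symm (inl n)) f) ∧
              (∀ f, ¬ M₁.tri f (c1.eqv.symm (inl n))) := by
            constructor
            · intro x hx
              exact he'.1 _ ((c2.tri_left _ x).mpr hx)
            · intro x hx
              exact he'.2 _ ((c2.tri_left x _).mpr hx)
          have h3 := c1.msg_eq _ hunm
          rw [c1.eqv.apply_symm_apply] at h3
          simp only [Sum.elim_inl] at h3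
          rw [h2, h3]
          rfl
        · rw [eqvL_symm_inr] at hu
          subst hu
          have hmu : MidUnm c1 c2 z :=
            ⟨fun w hw => he'.1 _ hw, fun w hw => he'.2 _ hw⟩
          simp only [Sum.elim_inr]
          rw [if_pos hmu]
          rcases z with a | b
          · have h2 := c2.msg_eq _ he
            have hee : iot c1 c2 (inl a) = c2.eqv.symm (inl (c1.eqv.symm (inr a))) := rfl
            rw [hee, c2.eqv.apply_symm_apply] at h2
            simp only [Sum.elim_inl] at h2
            have hunm : (∀ f, ¬ M₁.tri (c1.eqv.symm (inr a)) f) ∧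
                (∀ f, ¬ M₁.tri f (c1.eqv.symm (inr a))) := by
              constructor
              · intro x hx
                exact he'.1 _ ((c2.tri_left _ x).mpr hx)
              · intro x hx
                exact he'.2 _ ((c2.tri_left x _).mpr hx)
            have h3 := c1.msg_eq _ hunm
            rw [c1.eqv.apply_symm_apply] at h3
            simp only [Sum.elim_inr] at h3
            rw [hee, h2, h3]
            rfl
          · have h2 := c2.msg_eq _ he
            have hee : iot c1 c2 (inr b) = c2.eqv.symm (inr b) := rfl
            rw [hee, c2.eqv.apply_symm_apply] at h2
            simp only [Sum.elim_inr] at h2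
            rw [hee]
            exact h2
      have := hgen (eqvL c1 c2 e) ((eqvL c1 c2).symm_apply_apply e).symm
      exact this
    exact key

theorem concat_assoc_mem (h1 : ConcatMem N₁ N₂ M₁) (h2 : ConcatMem M₁ M₂ M) :
    ∃ M', ConcatMem N₂ M₂ M' ∧ ConcatMem N₁ M' M := by
  obtain ⟨c1⟩ := h1
  obtain ⟨c2⟩ := h2
  exact ⟨mid c1 c2, ⟨isConcatRight c1 c2⟩, ⟨isConcatLeft c1 c2⟩⟩

end Assoc

theorem gen_trans {S : Type} {R : S → S → Set (CMSC P Msg)} {a b c : S}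
    {M₁ M₂ M : CMSC P Msg} (h1 : Gen R a b M₁) (h2 : Gen R b c M₂)
    (hc : ConcatMem M₁ M₂ M) : Gen R a c M := by
  induction h1 generalizing M with
  | base h' => exact .step h' h2 hc
  | step hN hG hC ih =>
    obtain ⟨M'', hc1, hc2⟩ := concat_assoc_mem hC hc
    exact .step hN (ih h2 hc1) hc2

theorem gen_of_chain {S : Type} {R : S → S → Set (CMSC P Msg)} {s : S} :
    ∀ (l : List (CMSC P Msg)), l ≠ [] → (∀ N ∈ l, N ∈ R s s) →
      ∀ M, ConcatChain l M → Gen R s s M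
  | [], h, _, _, _ => absurd rfl h
  | [N], _, hm, M, hc => by
    have : M = N := hc
    exact this ▸ Gen.base (hm N (by simp))
  | N :: N' :: l, _, hm, M, hc => by
    obtain ⟨M', hch, hcm⟩ := hc
    exact Gen.step (hm N (by simp))
      (gen_of_chain (N' :: l) (by simp) (fun x hx => hm x (by simp [hx])) M' hch) hcm

theorem gen_of_elim {S : Type} {R : S → S → Set (CMSC P Msg)} {s a b : S}
    {M : CMSC P Msg} (h : M ∈ ElimR R s a b) : Gen R a b M := by
  simp only [ElimR, Set.mem_union, LangConcat, LangPlus, Set.mem_setOf_eq] at h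
  rcases h with (h | ⟨M₁, h1, M₂, h2, hc⟩) | ⟨M₁, h1, X, ⟨Q, ⟨l, hl, hlm, hch⟩, M₂, h2, hqc⟩, hc⟩
  · exact .base h
  · exact .step h1 (.base h2) hc
  · exact .step h1 (gen_trans (gen_of_chain l hl hlm Q hch) (.base h2) hqc) hc

theorem gen_elim_to_gen {S : Type} {R : S → S → Set (CMSC P Msg)} {s : S}
    {a b : {t : S // t ≠ s}} {M : CMSC P Msg}
    (hg : Gen (fun t₁ t₂ : {t : S // t ≠ s} => ElimR R s t₁.1 t₂.1) a b M) :
    Gen R a.1 b.1 M := by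
  induction hg with
  | base h' => exact gen_of_elim h'
  | step h1 h2 hc ih => exact gen_trans (gen_of_elim h1) ih hc

/-- state elimination preserves loop-connectedness: if every
cMSC generated by a cycle of the generalized HMSC `H` is connected, then the
same holds in `H_s`, obtained by eliminating a non-initial, non-accepting
state `s` (states of `H_s` are `S \ {s}`, transitions `ElimR R s`). -/
theorem state_elimination_loop_connected {S P Msg : Type}
    (R : S → S → Set (CMSC P Msg)) (s : S)
    (h : ∀ (t : S) (M : CMSC P Msg), Gen R t t M → M.Connected) :
    ∀ (t : {t : S // t ≠ s}) (M : CMSC P Msg),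
      Gen (fun t₁ t₂ : {t : S // t ≠ s} => ElimR R s t₁.1 t₂.1) t t M →
      M.Connected := by
  intro t M hM
  exact h t.1 M (gen_elim_to_gen hM)

end HMSCPaper
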